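/- (Theorem 1: existence of an initial singularity.) For every λ > 0 and every t₀ ∈ ℝ there is no non-trivial scalar field cosmology defined on the whole interval (−∞, t₀]. Equivalently: if K, φ : ℝ → ℝ satisfy, for all t ≤ t₀, K'(t) = −(3/2) φ'(t)², φ''(t) = −K(t) φ'(t) − λ(exp(λ φ(t)) − exp(−λ φ(t))), K(t)² = 3(exp(λ φ(t)) + exp(−λ φ(t))) + (3/2) φ'(t)² and K(t) > 0, and if φ'(t₁) ≠ 0 for some t₁ ≤ t₀, then a contradiction follows. Hence every non-trivial expanding solution has a past interval of existence that is bounded below (an initial space-time singularity is reached after finite proper time). -/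

import Mathlib

/-!
Along a solution, `1 / K` has derivative `3/2 u²` with `u = ψ / K`, so it grows unless the
kinetic fraction is small. Write `s = sinh (λφ) / K²`, `c = cosh (λφ) / K²`; the constraint reads
`6 c + 3/2 u² = 1`, and `c² - s² = 1 / K⁴`. Going back in time `K` increases from
`K t₁ > √6`, so when `u` is small, `c ≈ 1/6` forces `s²` away from `0`: the potential then
pushes `u` away from `0`, and the correction in `Z = 1/K - α ψ sinh (λφ) / K⁴` turns this into the
term `2αλ s²` of `Z'`. Hence on `(-∞, t₁]` the positive function `Z` has derivative bounded below
by a positive constant, which is impossible on a half-line reaching `-∞`.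
-/

open Real Set

lemma antitoneOn_Iic_of_hasDerivAt_nonpos {f f' : ℝ → ℝ} {b : ℝ}
    (hf : ∀ t ≤ b, HasDerivAt f (f' t) t) (hf' : ∀ t ≤ b, f' t ≤ 0) :
    AntitoneOn f (Iic b) :=
  antitoneOn_of_hasDerivWithinAt_nonpos (convex_Iic b)
    (fun t ht ↦ (hf t ht).continuousAt.continuousWithinAt)
    (fun t ht ↦ (hf t (interior_subset ht : t ∈ Iic b)).hasDerivWithinAt)
    (fun t ht ↦ hf' t (interior_subset ht : t ∈ Iic b))

lemma exists_nonpos_of_le_hasDerivAt {f f' : ℝ → ℝ} {b ν : ℝ} (hν : 0 < ν)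
    (hf : ∀ t ≤ b, HasDerivAt f (f' t) t) (hf' : ∀ t ≤ b, ν ≤ f' t) :
    ∃ t ≤ b, f t ≤ 0 := by
  have hanti : AntitoneOn (fun t ↦ ν * t - f t) (Iic b) :=
    antitoneOn_Iic_of_hasDerivAt_nonpos
      (fun t ht ↦ ((hasDerivAt_id t).const_mul ν).sub (hf t ht))
      (fun t ht ↦ by simpa using hf' t ht)
  have hle : b - |f b| / ν ≤ b := sub_le_self _ (by positivity)
  refine ⟨_, hle, ?_⟩
  have := hanti hle (mem_Iic.2 le_rfl) hle
  simp only [mul_sub, mul_div_cancel₀ _ hν.ne'] at this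
  linarith [le_abs_self (f b)]

noncomputable def lyapunov (α lam : ℝ) (K φ ψ : ℝ → ℝ) (t : ℝ) : ℝ :=
  (K t)⁻¹ - α * (ψ t * sinh (lam * φ t)) / K t ^ 4

noncomputable def lyapunovRate (α lam u s c : ℝ) : ℝ :=
  3 / 2 * u ^ 2 + α * u * s + 2 * α * lam * s ^ 2 - α * lam * u ^ 2 * c - 6 * α * u ^ 3 * s

lemma hasDerivAt_lyapunov {α lam t : ℝ} {K φ ψ : ℝ → ℝ} (hφ : HasDerivAt φ (ψ t) t)
    (hψ : HasDerivAt ψ (-K t * ψ t - 2 * lam * sinh (lam * φ t)) t)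
    (hK : HasDerivAt K (-(3 / 2) * ψ t ^ 2) t) (hK₀ : K t ≠ 0) :
    HasDerivAt (lyapunov α lam K φ ψ)
      (lyapunovRate α lam (ψ t / K t) (sinh (lam * φ t) / K t ^ 2) (cosh (lam * φ t) / K t ^ 2))
      t := by
  apply HasDerivAt.congr_deriv ((hK.inv hK₀).sub
    (((hψ.mul (hφ.const_mul lam).sinh).const_mul α).div (hK.pow 4) (pow_ne_zero 4 hK₀)))
  simp only [lyapunovRate, Pi.pow_apply, Pi.mul_apply]
  field_simp
  ring

lemma lyapunovRate_ge {α lam u s c δ : ℝ} (hlam : 0 < lam) (hα : 0 < α)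
    (hα₁ : α ≤ 2 * lam) (hα₂ : α * (lam + 6) ≤ 3) (hfried : 6 * c + 3 / 2 * u ^ 2 = 1)
    (hc : 0 ≤ c) (hs : s ^ 2 ≤ c ^ 2) (hsδ : c ^ 2 - δ ≤ s ^ 2) :
    α * lam * (1 / 36 - δ) ≤ lyapunovRate α lam u s c := by
  have hαlam : 0 < α * lam := mul_pos hα hlam
  have hc₆ : c ≤ 1 / 6 := by nlinarith
  have hu₁ : u ^ 2 ≤ 1 := by nlinarith
  have hs₆ : s ^ 2 ≤ 1 / 36 := by nlinarith
  have hus : u * s ≤ 1 / 6 :=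
    le_of_sq_le_sq (by nlinarith [mul_le_mul hu₁ hs₆ (sq_nonneg s) zero_le_one]) (by norm_num)
  have h₁ : -(u ^ 2 + α ^ 2 * s ^ 2) / 2 ≤ α * u * s := by nlinarith [sq_nonneg (u + α * s)]
  have h₂ : α * lam * u ^ 2 * c ≤ α * lam * u ^ 2 / 6 := by
    nlinarith [mul_le_mul_of_nonneg_left hc₆ (by positivity : 0 ≤ α * lam * u ^ 2)]
  have h₃ : 6 * α * u ^ 3 * s ≤ α * u ^ 2 := by
    nlinarith [mul_le_mul_of_nonneg_left hus (by positivity : 0 ≤ α * u ^ 2)]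
  have h₄ : 1 / 36 - u ^ 2 / 12 - δ ≤ s ^ 2 := by nlinarith [sq_nonneg (u ^ 2)]
  -- `h₁`–`h₃` and the constraints on `α` bound the rate below by `u² / 2 + α λ s²`
  unfold lyapunovRate
  nlinarith [mul_nonneg (sub_nonneg.2 hα₂) (sq_nonneg u),
    mul_nonneg (mul_nonneg hα.le (sub_nonneg.2 hα₁)) (sq_nonneg s),
    mul_le_mul_of_nonneg_left h₄ hαlam.le]

lemma lyapunovRate_ge_of_friedmann {α lam k K ψ x : ℝ} (hlam : 0 < lam) (hα : 0 < α)
    (hα₁ : α ≤ 2 * lam) (hα₂ : α * (lam + 6) ≤ 3) (hk : 0 < k) (hkK : k ≤ K)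
    (hfried : K ^ 2 = 6 * cosh x + 3 / 2 * ψ ^ 2) :
    α * lam * (1 / 36 - 1 / k ^ 4) ≤
      lyapunovRate α lam (ψ / K) (sinh x / K ^ 2) (cosh x / K ^ 2) := by
  have hK : 0 < K := hk.trans_le hkK
  have hcs : (cosh x / K ^ 2) ^ 2 - 1 / K ^ 4 = (sinh x / K ^ 2) ^ 2 := by
    field_simp; rw [cosh_sq]; ring
  have hKk : 1 / K ^ 4 ≤ 1 / k ^ 4 := one_div_le_one_div_of_le (by positivity) (by gcongr)
  refine lyapunovRate_ge hlam hα hα₁ hα₂ ?_ (by positivity) ?_ (by linarith)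
  · field_simp; linarith
  · nlinarith [one_div_pos.2 (pow_pos hK 4)]

lemma lyapunov_pos {α lam t : ℝ} {K φ ψ : ℝ → ℝ} (hα₀ : 0 ≤ α) (hα : α < 6) (hK : 0 < K t)
    (hfried : K t ^ 2 = 6 * cosh (lam * φ t) + 3 / 2 * ψ t ^ 2) :
    0 < lyapunov α lam K φ ψ t := by
  have hψ : |ψ t| ≤ K t := abs_le_of_sq_le_sq (by nlinarith [cosh_pos (lam * φ t)]) hK.le
  have hsinh : |sinh (lam * φ t)| ≤ K t ^ 2 / 6 := by
    have := abs_le_of_sq_le_sq (a := sinh (lam * φ t)) (b := cosh (lam * φ t))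
      (by rw [cosh_sq]; linarith) (cosh_pos _).le
    nlinarith
  have hprod : ψ t * sinh (lam * φ t) ≤ K t ^ 3 / 6 := by
    calc ψ t * sinh (lam * φ t) ≤ |ψ t| * |sinh (lam * φ t)| := by
          rw [← abs_mul]; exact le_abs_self _
      _ ≤ K t * (K t ^ 2 / 6) := mul_le_mul hψ hsinh (abs_nonneg _) hK.le
      _ = K t ^ 3 / 6 := by ring
  unfold lyapunov
  rw [sub_pos, div_lt_iff₀ (by positivity)]
  calc α * (ψ t * sinh (lam * φ t)) ≤ α * (K t ^ 3 / 6) := mul_le_mul_of_nonneg_left hprod hα₀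
    _ < K t ^ 3 := by nlinarith [pow_pos hK 3]
    _ = (K t)⁻¹ * K t ^ 4 := by field_simp

/-- (Theorem 1: existence of an initial singularity.) For every `λ > 0` and `t₀`, there
is no non-trivial scalar field cosmology with potential `V(φ) = exp(λφ) + exp(−λφ)`
defined on the whole interval `(−∞, t₀]`: if `K, φ` (with `ψ = φ'`) satisfy the field
equations, the Friedmann constraint and `K > 0` for all `t ≤ t₀`, and `ψ(t₁) ≠ 0` for
some `t₁ ≤ t₀`, then a contradiction follows. Hence every non-trivial expanding solution
has a past interval of existence bounded below (an initial singularity is reached after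
finite proper time). -/
theorem stmt15 (lam : ℝ) (hlam : 0 < lam) (t₀ : ℝ) (K φ ψ : ℝ → ℝ)
    (hφ : ∀ t ≤ t₀, HasDerivAt φ (ψ t) t)
    (hψ : ∀ t ≤ t₀, HasDerivAt ψ
      (-K t * ψ t - lam * (Real.exp (lam * φ t) - Real.exp (-(lam * φ t)))) t)
    (hK : ∀ t ≤ t₀, HasDerivAt K (-(3 / 2) * (ψ t) ^ 2) t)
    (hcon : ∀ t ≤ t₀,
      (K t) ^ 2 = 3 * (Real.exp (lam * φ t) + Real.exp (-(lam * φ t)))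
        + (3 / 2) * (ψ t) ^ 2)
    (hKpos : ∀ t ≤ t₀, 0 < K t)
    (hnt : ∃ t₁ ≤ t₀, ψ t₁ ≠ 0) :
    False := by
  obtain ⟨t₁, ht₁, hψt₁⟩ := hnt
  have hfried : ∀ t ≤ t₀, K t ^ 2 = 6 * cosh (lam * φ t) + 3 / 2 * ψ t ^ 2 := fun t ht ↦ by
    rw [hcon t ht, cosh_eq]; ring
  have hψ' : ∀ t ≤ t₀, HasDerivAt ψ (-K t * ψ t - 2 * lam * sinh (lam * φ t)) t :=
    fun t ht ↦ (hψ t ht).congr_deriv (by rw [sinh_eq]; ring)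
  have hKt₁ : 6 < K t₁ ^ 2 := by
    nlinarith [hfried t₁ ht₁, one_le_cosh (lam * φ t₁), sq_pos_of_ne_zero hψt₁]
  have hKle : ∀ t ≤ t₁, K t₁ ≤ K t := fun t ht ↦
    antitoneOn_Iic_of_hasDerivAt_nonpos hK (fun t _ ↦ by nlinarith [sq_nonneg (ψ t)])
      (ht.trans ht₁) ht₁ ht
  obtain ⟨α, hα, hα₁, hα₂⟩ : ∃ α, 0 < α ∧ α ≤ 2 * lam ∧ α * (lam + 6) ≤ 3 :=
    ⟨min (2 * lam) (3 / (lam + 6)), by positivity, min_le_left _ _,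
      (mul_le_mul_of_nonneg_right (min_le_right _ _) (by positivity)).trans_eq
        (div_mul_cancel₀ _ (by positivity))⟩
  have hν : 0 < α * lam * (1 / 36 - 1 / K t₁ ^ 4) := by
    have : 1 / K t₁ ^ 4 < 1 / 36 := by
      rw [div_lt_div_iff₀ (pow_pos (hKpos t₁ ht₁) 4) (by norm_num)]; nlinarith
    exact mul_pos (mul_pos hα hlam) (sub_pos.2 this)
  obtain ⟨t, ht, hZt⟩ := exists_nonpos_of_le_hasDerivAt hν
    (fun t ht ↦ hasDerivAt_lyapunov (α := α) (hφ t (ht.trans ht₁)) (hψ' t (ht.trans ht₁))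
      (hK t (ht.trans ht₁)) (hKpos t (ht.trans ht₁)).ne')
    (fun t ht ↦ lyapunovRate_ge_of_friedmann hlam hα hα₁ hα₂ (hKpos t₁ ht₁) (hKle t ht)
      (hfried t (ht.trans ht₁)))
  exact (lyapunov_pos hα.le (by nlinarith) (hKpos t (ht.trans ht₁))
    (hfried t (ht.trans ht₁))).not_ge hZt
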